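/- arXiv:2409.10864 — 2 statements merged into one kernel-verified Lean document; each statement's English description precedes it below -/
import Mathlib

section
/- Let X be a finite set, f : X → ℝ a function, A an m×n real matrix, b ∈ ℝ^m (with X ⊆ ℝ^n), and suppose the feasible set F = {x ∈ X | A x ≤ b} is nonempty. Define the penalized objective g_ρ(x) = f(x) + ρ · ∑_{j=1}^m max(0, (A x − b)_j). Then there exists ρ₀ > 0 such that for all ρ > ρ₀, every minimizer of g_ρ over X lies in F and is a minimizer of f over F. -/
/-!
Since `X` is finite, one weight `ρ₀` makes `ρ * pen x` exceed every gain `f y - f x` at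
every infeasible `x ∈ X` once `ρ > ρ₀`. A penalized minimizer then cannot be infeasible, as a
feasible point (penalty `0`) would beat it, and on the feasible set the penalized objective is
`f` itself.
-/

open Finset

lemma sum_max_zero_sub_eq_zero_iff {ι : Type*} [Fintype ι] (u v : ι → ℝ) :
    ∑ j, max 0 (u j - v j) = 0 ↔ ∀ j, u j ≤ v j := by
  rw [sum_eq_zero_iff_of_nonneg fun j _ => le_max_left 0 (u j - v j)]
  simp only [mem_univ, true_implies, max_eq_left_iff, sub_nonpos]

/-- The witness is `1 + ∑_{x, y ∈ X} |f y - f x| / |pen x|`; the absolute value in the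
denominator keeps every summand nonnegative, so each one bounds the sum. -/
lemma exists_penalty_weight_dominates {α : Type*} (X : Finset α) (f pen : α → ℝ) :
    ∃ ρ₀ > (0 : ℝ), ∀ ρ > ρ₀, ∀ x ∈ X, ∀ y ∈ X,
      0 < pen x → f y < f x + ρ * pen x := by
  set S := ∑ p ∈ X ×ˢ X, |f p.2 - f p.1| / |pen p.1|
  have hS : 0 ≤ S := sum_nonneg fun p _ => by positivity
  refine ⟨1 + S, by linarith, fun ρ hρ x hx y hy hpos => ?_⟩
  have hterm : |f y - f x| / pen x ≤ S := by
    simpa only [abs_of_pos hpos] using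
      single_le_sum (f := fun p : α × α => |f p.2 - f p.1| / |pen p.1|)
        (fun p _ => by positivity) (a := (x, y))
        (mem_product.2 ⟨hx, hy⟩)
  calc f y ≤ f x + |f y - f x| := by linarith [le_abs_self (f y - f x)]
    _ = f x + |f y - f x| / pen x * pen x := by rw [div_mul_cancel₀ _ hpos.ne']
    _ < f x + ρ * pen x := by gcongr; linarith

theorem exists_exact_penalty_weight {α : Type*} (X : Finset α) (f pen : α → ℝ)
    (hpen : ∀ x ∈ X, 0 ≤ pen x) (hfeas : ∃ x₀ ∈ X, pen x₀ = 0) :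
    ∃ ρ₀ > (0 : ℝ), ∀ ρ > ρ₀, ∀ x ∈ X,
      (∀ y ∈ X, f x + ρ * pen x ≤ f y + ρ * pen y) →
      pen x = 0 ∧ ∀ y ∈ X, pen y = 0 → f x ≤ f y := by
  obtain ⟨x₀, hx₀, hpen₀⟩ := hfeas
  obtain ⟨ρ₀, hρ₀, hdom⟩ := exists_penalty_weight_dominates X f pen
  refine ⟨ρ₀, hρ₀, fun ρ hρ x hx hmin => ?_⟩
  have hx_feas : pen x = 0 := by
    refine ((hpen x hx).eq_or_lt.resolve_right fun hpos => ?_).symm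
    have := hmin x₀ hx₀
    rw [hpen₀, mul_zero, add_zero] at this
    exact (hdom ρ hρ x hx x₀ hx₀ hpos).not_ge this
  refine ⟨hx_feas, fun y hy hy_feas => ?_⟩
  simpa only [hx_feas, hy_feas, mul_zero, add_zero] using hmin y hy

/-- Exact penalty for finite-domain optimization: if the feasible set
`F = {x ∈ X | A x ≤ b}` is nonempty, then for sufficiently large penalty weight `ρ`,
every minimizer of the penalized objective `g_ρ(x) = f(x) + ρ · ∑ⱼ max(0, (Ax−b)ⱼ)`
over `X` is feasible and minimizes `f` over `F`. -/
theorem exact_penalty_finite_domain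
    (n m : ℕ) (X : Finset (Fin n → ℝ)) (f : (Fin n → ℝ) → ℝ)
    (A : Matrix (Fin m) (Fin n) ℝ) (b : Fin m → ℝ)
    (F : Finset (Fin n → ℝ))
    (hF : F = X.filter (fun x => ∀ j, A.mulVec x j ≤ b j))
    (hFne : F.Nonempty)
    (pen : (Fin n → ℝ) → ℝ)
    (hpen : ∀ x, pen x = ∑ j, max 0 (A.mulVec x j - b j)) :
    ∃ ρ₀ > (0 : ℝ), ∀ ρ > ρ₀, ∀ x ∈ X,
      (∀ y ∈ X, f x + ρ * pen x ≤ f y + ρ * pen y) →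
      x ∈ F ∧ ∀ y ∈ F, f x ≤ f y := by
  have hmem : ∀ x, x ∈ F ↔ x ∈ X ∧ pen x = 0 := fun x => by
    rw [hF, mem_filter, hpen, sum_max_zero_sub_eq_zero_iff]
  have hpen_nonneg : ∀ x ∈ X, 0 ≤ pen x := fun x _ =>
    (hpen x).symm ▸ sum_nonneg fun j _ => le_max_left _ _
  obtain ⟨x₀, hx₀⟩ := hFne
  obtain ⟨ρ₀, hρ₀, hexact⟩ :=
    exists_exact_penalty_weight X f pen hpen_nonneg ⟨x₀, (hmem x₀).1 hx₀⟩
  refine ⟨ρ₀, hρ₀, fun ρ hρ x hx hmin => ?_⟩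
  obtain ⟨hx_feas, hx_opt⟩ := hexact ρ hρ x hx hmin
  exact ⟨(hmem x).2 ⟨hx, hx_feas⟩, fun y hy => hx_opt y ((hmem y).1 hy).1 ((hmem y).1 hy).2⟩
end

section
/- Let X ⊆ ℤ^n be finite and nonempty, f : X → ℝ linear (f(x) = qᵀx), A ∈ ℝ^{m×n}, b ∈ ℝ^m with {x ∈ X | Ax ≤ b} nonempty. Set ξ = max_{x,y∈X} (f(x) − f(y)) and ε = min { ∑_j max(0,(Ax−b)_j) : x ∈ X, Ax ≰ b } (taking ε = +∞ if every x ∈ X is feasible). Then for any ρ > ξ/ε, every minimizer of f(x) + ρ·∑_j max(0,(Ax−b)_j) over X satisfies Ax ≤ b. -/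
/-!
If `x` is an infeasible minimizer of `f + ρ · pen` and `x₀` is feasible, then `pen x₀ = 0`
gives `ρ · pen x ≤ f x₀ - f x ≤ ξ`. Since `x` is infeasible, `pen x ≥ ε > 0`, so
`ρ · ε ≤ ξ`, contradicting `ρ > ξ / ε`.
-/

open Finset

theorem sum_max_zero_sub_eq_zero {ι : Type*} [Fintype ι] {u b : ι → ℝ} (h : ∀ j, u j ≤ b j) :
    ∑ j, max 0 (u j - b j) = 0 :=
  sum_eq_zero fun j _ => max_eq_left (sub_nonpos.2 (h j))

theorem sum_max_zero_sub_pos {ι : Type*} [Fintype ι] {u b : ι → ℝ} (h : ¬ ∀ j, u j ≤ b j) :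
    0 < ∑ j, max 0 (u j - b j) := by
  obtain ⟨j, hj⟩ := not_forall.1 h
  exact sum_pos' (fun k _ => le_max_left _ _)
    ⟨j, mem_univ j, lt_max_of_lt_right (sub_pos.2 (not_le.1 hj))⟩

theorem feasible_of_forall_penalized_le {α : Type*} (X : Finset α) (p : α → Prop)
    [DecidablePred p] (f pen : α → ℝ) (hzero : ∀ x, p x → pen x = 0)
    (hpos : ∀ x, ¬ p x → 0 < pen x) (hfeas : ∃ x ∈ X, p x) {ξ : ℝ}
    (hξ : ∀ x ∈ X, ∀ y ∈ X, f x - f y ≤ ξ) {ρ : ℝ} (hρpos : 0 < ρ)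
    (hρ : ∀ h : (X.filter (¬ p ·)).Nonempty, ξ / (X.filter (¬ p ·)).inf' h pen < ρ)
    {x : α} (hx : x ∈ X) (hmin : ∀ y ∈ X, f x + ρ * pen x ≤ f y + ρ * pen y) : p x := by
  by_contra hpx
  obtain ⟨x₀, hx₀X, hx₀⟩ := hfeas
  have hxV : x ∈ X.filter (¬ p ·) := mem_filter.2 ⟨hx, hpx⟩
  set ε := (X.filter (¬ p ·)).inf' ⟨x, hxV⟩ pen
  have hε_pos : 0 < ε := (lt_inf'_iff _).2 fun y hy => hpos y (mem_filter.1 hy).2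
  have hξ_lt : ξ < ρ * ε := by
    have := hρ ⟨x, hxV⟩
    rwa [div_lt_iff₀ hε_pos] at this
  have hρε_le : ρ * ε ≤ ξ :=
    calc ρ * ε ≤ ρ * pen x := mul_le_mul_of_nonneg_left (inf'_le pen hxV) hρpos.le
      _ ≤ f x₀ - f x := by
        have h := hmin x₀ hx₀X
        rw [hzero x₀ hx₀, mul_zero, add_zero] at h
        linarith
      _ ≤ ξ := hξ x₀ hx₀X x hx
  exact (hξ_lt.trans_le hρε_le).false

theorem exact_penalty_quantitative_general
    (n m : ℕ) (X : Finset (Fin n → ℤ)) (hXne : X.Nonempty)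
    (A : Matrix (Fin m) (Fin n) ℝ) (b : Fin m → ℝ)
    (f : (Fin n → ℤ) → ℝ)
    (pen : (Fin n → ℤ) → ℝ)
    (hpen : ∀ x, pen x = ∑ j, max 0 (A.mulVec (fun i => ((x i : ℝ))) j - b j))
    (hfeas : ∃ x ∈ X, ∀ j, A.mulVec (fun i => ((x i : ℝ))) j ≤ b j)
    (ξ : ℝ) (hξ : ξ = (X ×ˢ X).sup' (hXne.product hXne) (fun p => f p.1 - f p.2))
    (V : Finset (Fin n → ℤ))
    (hV : V = X.filter (fun x => ¬ ∀ j, A.mulVec (fun i => ((x i : ℝ))) j ≤ b j))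
    (ρ : ℝ) (hρpos : 0 < ρ)
    (hρ : ∀ h : V.Nonempty, ξ / V.inf' h pen < ρ) :
    ∀ x ∈ X, (∀ y ∈ X, f x + ρ * pen x ≤ f y + ρ * pen y) →
      ∀ j, A.mulVec (fun i => ((x i : ℝ))) j ≤ b j := by
  subst hV
  intro x hx hmin
  exact feasible_of_forall_penalized_le X _ f pen
    (fun y hy => (hpen y).trans (sum_max_zero_sub_eq_zero hy))
    (fun y hy => (hpen y).symm ▸ sum_max_zero_sub_pos hy) hfeas
    (fun y hy z hz => hξ ▸ le_sup' (fun p => f p.1 - f p.2) (mk_mem_product hy hz))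
    hρpos hρ hx hmin

/-- Quantitative version of Lemma 2 with an explicit threshold: with `X ⊆ ℤⁿ` finite,
`f` linear, `ξ` the maximum objective variation over `X` and `ε` the minimum positive
constraint violation, any `ρ > ξ/ε` makes every minimizer of the penalized objective
feasible (the case where every point is feasible, `ε = +∞`, is trivial). -/
theorem exact_penalty_quantitative
    (n m : ℕ) (X : Finset (Fin n → ℤ)) (hXne : X.Nonempty)
    (q : Fin n → ℝ) (A : Matrix (Fin m) (Fin n) ℝ) (b : Fin m → ℝ)
    (f : (Fin n → ℤ) → ℝ) (hf : ∀ x, f x = ∑ i, q i * (x i : ℝ))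
    (pen : (Fin n → ℤ) → ℝ)
    (hpen : ∀ x, pen x = ∑ j, max 0 (A.mulVec (fun i => ((x i : ℝ))) j - b j))
    (hfeas : ∃ x ∈ X, ∀ j, A.mulVec (fun i => ((x i : ℝ))) j ≤ b j)
    (ξ : ℝ) (hξ : ξ = (X ×ˢ X).sup' (hXne.product hXne) (fun p => f p.1 - f p.2))
    (V : Finset (Fin n → ℤ))
    (hV : V = X.filter (fun x => ¬ ∀ j, A.mulVec (fun i => ((x i : ℝ))) j ≤ b j))
    (ρ : ℝ) (hρpos : 0 < ρ)
    (hρ : ∀ h : V.Nonempty, ξ / V.inf' h pen < ρ) :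
    ∀ x ∈ X, (∀ y ∈ X, f x + ρ * pen x ≤ f y + ρ * pen y) →
      ∀ j, A.mulVec (fun i => ((x i : ℝ))) j ≤ b j :=
  exact_penalty_quantitative_general n m X hXne A b f pen hpen hfeas ξ hξ V hV ρ hρpos hρ
end
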